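/- Let H be a real or complex Hilbert space, A a bounded operator on H, and B a self-adjoint, positive, trace-class operator on H. Let G be a topological group and g ↦ U_g a strongly continuous unitary representation of G on H (i.e. U_e = I, U_{gh} = U_g U_h, each U_g unitary, and g ↦ U_g x is continuous for every x ∈ H). Then the map G ∋ g ↦ tr(A U_g B U_g⁻¹) is continuous (equivalently, g ↦ tr(U_g⁻¹ A U_g B) is continuous). -/

import Mathlib

noncomputable section
open RCLike ContinuousLinearMap

universe u v w

variable {𝕜 : Type*} [RCLike 𝕜] {E : Type u} [NormedAddCommGroup E] [InnerProductSpace 𝕜 E]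
  [CompleteSpace E]

open Classical in
/-- The absolute value `|A| = √(A* A)` of a bounded operator: the unique positive
selfadjoint square root of `A* A`. -/
noncomputable def clmAbs (A : E →L[𝕜] E) : E →L[𝕜] E :=
  if h : ∃ S : E →L[𝕜] E, S.IsPositive ∧ S * S = star A * A then h.choose else 0

/-- `A` is trace class if `∑_{u∈N} ⟨u, |A| u⟩ < ∞` for some Hilbert basis `N`. -/
def IsTraceClass (A : E →L[𝕜] E) : Prop :=
  ∃ (ι : Type u) (N : HilbertBasis ι 𝕜 E),
    Summable fun i => re (inner 𝕜 (N i) (clmAbs A (N i)) : 𝕜)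

/-- The trace of `A` computed along the Hilbert basis `N`. -/
noncomputable def traceAlong {ι : Type v} (N : HilbertBasis ι 𝕜 E) (A : E →L[𝕜] E) : 𝕜 :=
  ∑' i, (inner 𝕜 (N i) (A (N i)) : 𝕜)

variable (𝕜 E) in
/-- A choice of Hilbert basis of `E`. -/
noncomputable def stdHilbertBasis : HilbertBasis (exists_hilbertBasis 𝕜 E).choose 𝕜 E :=
  (exists_hilbertBasis 𝕜 E).choose_spec.choose

/-- The trace `tr A = ∑_{u∈N} ⟨u, A u⟫` (basis independent for trace-class operators). -/
noncomputable def clmTrace (A : E →L[𝕜] E) : 𝕜 :=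
  traceAlong (stdHilbertBasis 𝕜 E) A

/-- The trace norm `‖A‖₁ = ∑_{u ∈ N} ⟨u, |A| u⟩` (basis independent). -/
noncomputable def traceNorm (A : E →L[𝕜] E) : ℝ :=
  ∑' i, re (inner 𝕜 (stdHilbertBasis 𝕜 E i) (clmAbs A (stdHilbertBasis 𝕜 E i)) : 𝕜)

/-- An orthogonal projection: `P ∘ P = P` and `P* = P`. -/
def IsOrthoProj (P : E →L[𝕜] E) : Prop :=
  IsSelfAdjoint P ∧ P * P = P

/-!
A positive operator `B` has a positive square root `C`, built directly so that the argument also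
works over `ℝ`: `1 - C / √c`, for `c > ‖B‖`, is the norm limit of the iteration
`W ↦ (Z + W²) / 2` with `Z = 1 - B / c`, which is dominated termwise by the scalar iteration at
`Z = 1`. Positive square roots are unique (two commuting ones agree, and every positive root of
`B²` commutes with the constructed one), so `|B| = B`, and trace class gives a Hilbert basis `N`
with `∑ⱼ ‖C Nⱼ‖² < ∞`. Exchanging two sums, `tr (A U_g B U_g*) = ∑ⱼ ⟪U_g C Nⱼ, A U_g C Nⱼ⟫`;
every term is continuous in `g` and bounded by `‖A‖ ‖C Nⱼ‖²`, so the series converges uniformly.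
-/

open Filter Topology
open scoped InnerProductSpace

section BanachAlgebra

variable {A : Type*} [NormedRing A] [NormedAlgebra 𝕜 A]

variable (𝕜) in
/-- Fixed-point iteration for `W = (Z + W²) / 2`, i.e. `(1 - W)² = 1 - Z`. -/
def oneSubSqrtSeq (Z : A) : ℕ → A
  | 0 => 0
  | n + 1 => (2⁻¹ : 𝕜) • (Z + oneSubSqrtSeq Z n * oneSubSqrtSeq Z n)

lemma oneSubSqrtSeq_succ (Z : A) (n : ℕ) :
    oneSubSqrtSeq 𝕜 Z (n + 1) = (2⁻¹ : 𝕜) • (Z + oneSubSqrtSeq 𝕜 Z n * oneSubSqrtSeq 𝕜 Z n) :=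
  rfl

lemma Commute.oneSubSqrtSeq_right {R Z : A} (h : Commute R Z) :
    ∀ n, Commute R (oneSubSqrtSeq 𝕜 Z n)
  | 0 => Commute.zero_right R
  | n + 1 =>
    (h.add_right ((h.oneSubSqrtSeq_right n).mul_right (h.oneSubSqrtSeq_right n))).smul_right _

lemma IsSelfAdjoint.oneSubSqrtSeq [StarRing A] [StarModule 𝕜 A] {Z : A} (hZ : IsSelfAdjoint Z)
    (n : ℕ) : IsSelfAdjoint (oneSubSqrtSeq 𝕜 Z n) := by
  induction n with
  | zero => exact .zero _
  | succ n hW =>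
    rw [oneSubSqrtSeq_succ, IsSelfAdjoint, star_smul, star_add, star_mul, hZ.star_eq, hW.star_eq,
      star_inv₀, star_ofNat]

lemma oneSubSqrtSeq_one_mem_Icc (n : ℕ) : oneSubSqrtSeq ℝ (1 : ℝ) n ∈ Set.Icc 0 1 := by
  induction n with
  | zero => simp [oneSubSqrtSeq]
  | succ n ih =>
    obtain ⟨h0, h1⟩ := ih
    rw [oneSubSqrtSeq_succ, smul_eq_mul]
    constructor <;> nlinarith

lemma oneSubSqrtSeq_one_succ_sub (n : ℕ) :
    oneSubSqrtSeq ℝ (1 : ℝ) (n + 1) - oneSubSqrtSeq ℝ 1 n = (1 - oneSubSqrtSeq ℝ 1 n) ^ 2 / 2 := by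
  rw [oneSubSqrtSeq_succ, smul_eq_mul]
  ring

lemma summable_oneSubSqrtSeq_one_succ_sub :
    Summable fun n => oneSubSqrtSeq ℝ (1 : ℝ) (n + 1) - oneSubSqrtSeq ℝ 1 n := by
  refine summable_of_sum_range_le (c := 1) (fun n => ?_) (fun n => ?_)
  · rw [oneSubSqrtSeq_one_succ_sub]
    positivity
  · rw [Finset.sum_range_sub (fun n => oneSubSqrtSeq ℝ (1 : ℝ) n)]
    simp only [oneSubSqrtSeq, sub_zero]
    exact (oneSubSqrtSeq_one_mem_Icc n).2

lemma norm_oneSubSqrtSeq_le {Z : A} (hZ : ‖Z‖ ≤ 1) (n : ℕ) :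
    ‖oneSubSqrtSeq 𝕜 Z n‖ ≤ oneSubSqrtSeq ℝ (1 : ℝ) n := by
  induction n with
  | zero => simp [oneSubSqrtSeq]
  | succ n ih =>
    rw [oneSubSqrtSeq_succ, oneSubSqrtSeq_succ, norm_smul, smul_eq_mul, norm_inv, RCLike.norm_ofNat]
    gcongr
    calc ‖Z + oneSubSqrtSeq 𝕜 Z n * oneSubSqrtSeq 𝕜 Z n‖
        ≤ ‖Z‖ + ‖oneSubSqrtSeq 𝕜 Z n‖ * ‖oneSubSqrtSeq 𝕜 Z n‖ :=
          (norm_add_le _ _).trans (by gcongr; exact norm_mul_le _ _)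
      _ ≤ 1 + oneSubSqrtSeq ℝ 1 n * oneSubSqrtSeq ℝ 1 n := by
          have := (oneSubSqrtSeq_one_mem_Icc n).1
          gcongr

/-- `Wₙ₊₂ - Wₙ₊₁ = (Wₙ₊₁ + Wₙ) (Wₙ₊₁ - Wₙ) / 2`, and likewise for the scalar majorant. -/
lemma norm_oneSubSqrtSeq_succ_sub_le {Z : A} (hZ : ‖Z‖ ≤ 1) (n : ℕ) :
    ‖oneSubSqrtSeq 𝕜 Z (n + 1) - oneSubSqrtSeq 𝕜 Z n‖
      ≤ oneSubSqrtSeq ℝ (1 : ℝ) (n + 1) - oneSubSqrtSeq ℝ 1 n := by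
  induction n with
  | zero =>
    simp only [oneSubSqrtSeq, mul_zero, add_zero, sub_zero, norm_smul,
      norm_inv, RCLike.norm_ofNat, smul_eq_mul, mul_one]
    linarith
  | succ n ih =>
    let W := oneSubSqrtSeq 𝕜 Z
    let w := oneSubSqrtSeq ℝ (1 : ℝ)
    have hcomm : Commute (W n) (W (n + 1)) :=
      ((Commute.refl Z).oneSubSqrtSeq_right (n + 1)).symm.oneSubSqrtSeq_right n |>.symm
    have hW : W (n + 2) - W (n + 1) = (2⁻¹ : 𝕜) • ((W (n + 1) + W n) * (W (n + 1) - W n)) := by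
      change (2⁻¹ : 𝕜) • (Z + W (n + 1) * W (n + 1)) - (2⁻¹ : 𝕜) • (Z + W n * W n) = _
      rw [← smul_sub, add_mul, mul_sub, mul_sub, hcomm.eq]
      congr 1
      abel
    have hw : w (n + 2) - w (n + 1) = 2⁻¹ * ((w (n + 1) + w n) * (w (n + 1) - w n)) := by
      simp only [w, oneSubSqrtSeq_succ _ (n + 1), oneSubSqrtSeq_succ _ n, smul_eq_mul]
      ring
    rw [hW, hw, norm_smul, norm_inv, RCLike.norm_ofNat]
    gcongr
    refine (norm_mul_le _ _).trans (mul_le_mul ((norm_add_le _ _).trans ?_) ih (norm_nonneg _) ?_)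
    · exact add_le_add (norm_oneSubSqrtSeq_le hZ _) (norm_oneSubSqrtSeq_le hZ _)
    · exact add_nonneg (oneSubSqrtSeq_one_mem_Icc _).1 (oneSubSqrtSeq_one_mem_Icc _).1

lemma cauchySeq_oneSubSqrtSeq {Z : A} (hZ : ‖Z‖ ≤ 1) : CauchySeq (oneSubSqrtSeq 𝕜 Z) :=
  cauchySeq_of_dist_le_of_summable _ (fun n => by
    rw [dist_comm, dist_eq_norm]; exact norm_oneSubSqrtSeq_succ_sub_le hZ n)
    summable_oneSubSqrtSeq_one_succ_sub

theorem exists_tendsto_oneSubSqrtSeq [CompleteSpace A] {Z : A} (hZ : ‖Z‖ ≤ 1) :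
    ∃ W : A, Tendsto (oneSubSqrtSeq 𝕜 Z) atTop (𝓝 W) ∧ ‖W‖ ≤ 1 ∧
      (1 - W) * (1 - W) = 1 - Z ∧ ∀ R, Commute R Z → Commute R W := by
  obtain ⟨W, hW⟩ := cauchySeq_tendsto_of_complete (cauchySeq_oneSubSqrtSeq (𝕜 := 𝕜) hZ)
  have hfix : W = (2⁻¹ : 𝕜) • (Z + W * W) :=
    tendsto_nhds_unique ((tendsto_add_atTop_iff_nat 1).mpr hW)
      (((hW.mul hW).const_add Z).const_smul _)
  refine ⟨W, hW, ?_, ?_, fun R hR => ?_⟩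
  · exact le_of_tendsto' hW.norm fun n =>
      (norm_oneSubSqrtSeq_le hZ n).trans (oneSubSqrtSeq_one_mem_Icc n).2
  · have h2 : W + W = Z + W * W := by
      rw [← two_smul 𝕜 W]
      conv_lhs => rw [hfix, smul_smul]
      norm_num
    calc (1 - W) * (1 - W) = 1 - (W + W) + W * W := by noncomm_ring
      _ = 1 - Z := by rw [h2]; abel
  · exact tendsto_nhds_unique ((hW.const_mul R).congr fun n => (hR.oneSubSqrtSeq_right n).eq)
      (hW.mul_const R)

end BanachAlgebra

section PositiveOperators

lemma ContinuousLinearMap.IsPositive.norm_le_one {H : Type*} [NormedAddCommGroup H]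
    [InnerProductSpace 𝕜 H] {T : H →L[𝕜] H} (hT : T.IsPositive)
    (hT1 : (1 - T).IsPositive) : ‖T‖ ≤ 1 := by
  rw [T.norm_eq_iSup_rayleighQuotient hT.isSymmetric]
  refine ciSup_le fun x => ?_
  have hle : re ⟪T x, x⟫_𝕜 ≤ ‖x‖ ^ 2 := by
    have := hT1.re_inner_nonneg_left x
    rwa [sub_apply, one_apply_eq_self, inner_sub_left, map_sub, inner_self_eq_norm_sq,
      sub_nonneg] at this
  rw [rayleighQuotient, reApplyInnerSelf_apply, abs_div, abs_of_nonneg (hT.re_inner_nonneg_left x),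
    abs_of_nonneg (by positivity)]
  exact div_le_one_of_le₀ hle (by positivity)

lemma ContinuousLinearMap.isPositive_one_sub_of_norm_le_one {T : E →L[𝕜] E} (hT : IsSelfAdjoint T)
    (hT1 : ‖T‖ ≤ 1) : (1 - T).IsPositive := by
  refine isPositive_def'.mpr ⟨.sub (.one _) hT, fun x => ?_⟩
  have : re ⟪T x, x⟫_𝕜 ≤ ‖x‖ ^ 2 :=
    calc re ⟪T x, x⟫_𝕜 ≤ ‖T x‖ * ‖x‖ := (re_le_norm _).trans (norm_inner_le_norm _ _)
      _ ≤ ‖T‖ * ‖x‖ * ‖x‖ := by gcongr; exact T.le_opNorm x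
      _ ≤ ‖x‖ ^ 2 := by nlinarith [norm_nonneg x]
  rw [reApplyInnerSelf_apply, sub_apply, one_apply_eq_self, inner_sub_left, map_sub,
    inner_self_eq_norm_sq]
  linarith

theorem ContinuousLinearMap.IsPositive.exists_mul_self_eq {D : E →L[𝕜] E} (hD : D.IsPositive) :
    ∃ C : E →L[𝕜] E, C.IsPositive ∧ C * C = D ∧ ∀ R, Commute R D → Commute R C := by
  set c : ℝ := ‖D‖ + 1
  have hc0 : 0 < c := by positivity
  set D₁ : E →L[𝕜] E := ((c⁻¹ : ℝ) : 𝕜) • D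
  have hD₁ : D₁.IsPositive := hD.smul_of_nonneg (RCLike.ofReal_nonneg.mpr (by positivity))
  have hD₁1 : ‖D₁‖ ≤ 1 := by
    rw [norm_smul, norm_ofReal, abs_of_pos (inv_pos.mpr hc0), inv_mul_le_one₀ hc0]
    linarith
  have hZ : ‖1 - D₁‖ ≤ 1 :=
    (isPositive_one_sub_of_norm_le_one hD₁.isSelfAdjoint hD₁1).norm_le_one (by rwa [sub_sub_cancel])
  obtain ⟨W, hW, hW1, hWsq, hWcomm⟩ := exists_tendsto_oneSubSqrtSeq (𝕜 := 𝕜) hZ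
  have hWsa : IsSelfAdjoint W :=
    isClosed_eq continuous_star continuous_id |>.mem_of_tendsto hW
      (.of_forall ((IsSelfAdjoint.one _).sub hD₁.isSelfAdjoint).oneSubSqrtSeq)
  refine ⟨((√c : ℝ) : 𝕜) • (1 - W), (isPositive_one_sub_of_norm_le_one hWsa hW1).smul_of_nonneg
    (RCLike.ofReal_nonneg.mpr (Real.sqrt_nonneg c)), ?_, fun R hR => ?_⟩
  · rw [smul_mul_smul_comm, hWsq, sub_sub_cancel, smul_smul, ← ofReal_mul,
      Real.mul_self_sqrt hc0.le, ofReal_inv, mul_inv_cancel₀ (ofReal_ne_zero.mpr hc0.ne'),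
      one_smul]
  · exact ((Commute.one_right R).sub_right
      (hWcomm R ((Commute.one_right R).sub_right (hR.smul_right _)))).smul_right _

lemma ContinuousLinearMap.IsPositive.apply_eq_zero_of_re_inner_eq_zero {P : E →L[𝕜] E}
    (hP : P.IsPositive) {x : E} (hx : re ⟪P x, x⟫_𝕜 = 0) : P x = 0 := by
  obtain ⟨Q, hQ, rfl, -⟩ := hP.exists_mul_self_eq
  have hQx : Q x = 0 := by
    rwa [mul_apply_eq_comp, hQ.inner_left_eq_inner_right, inner_self_eq_norm_sq, sq_eq_zero_iff,
      norm_eq_zero] at hx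
  rw [mul_apply_eq_comp, hQx, map_zero]

/-- With `T = S - C`, commutation gives `(S + C) T = S² - C² = 0`, so `S` and `C` have vanishing
quadratic forms on the range of `T`; hence `T² = 0`. -/
lemma ContinuousLinearMap.IsPositive.eq_of_commute_of_mul_self_eq {S C : E →L[𝕜] E}
    (hS : S.IsPositive) (hC : C.IsPositive) (hcomm : Commute S C) (h : S * S = C * C) :
    S = C := by
  have hT : IsSelfAdjoint (S - C) := hS.isSelfAdjoint.sub hC.isSelfAdjoint
  have hkill : (S + C) * (S - C) = 0 := by
    rw [add_mul, mul_sub, mul_sub, h, hcomm.eq]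
    abel
  refine sub_eq_zero.mp (ContinuousLinearMap.ext fun x => ?_)
  set y := (S - C) x
  have hform : re ⟪S y, y⟫_𝕜 + re ⟪C y, y⟫_𝕜 = 0 := by
    rw [← map_add, ← inner_add_left, ← add_apply, ← mul_apply_eq_comp, hkill, zero_apply,
      inner_zero_left, map_zero]
  have hSy := hS.apply_eq_zero_of_re_inner_eq_zero
    (le_antisymm (by linarith [hC.re_inner_nonneg_left y]) (hS.re_inner_nonneg_left y))
  have hCy := hC.apply_eq_zero_of_re_inner_eq_zero
    (le_antisymm (by linarith [hS.re_inner_nonneg_left y]) (hC.re_inner_nonneg_left y))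
  have hTy : (S - C) y = 0 := by rw [sub_apply, hSy, hCy, sub_zero]
  rw [zero_apply, ← inner_self_eq_zero (𝕜 := 𝕜)]
  change ⟪(S - C) x, y⟫_𝕜 = 0
  rw [show ⟪(S - C) x, y⟫_𝕜 = ⟪x, (S - C) y⟫_𝕜 from hT.isSymmetric x y, hTy, inner_zero_right]

lemma IsSelfAdjoint.isPositive_mul_self {T : E →L[𝕜] E} (hT : IsSelfAdjoint T) :
    (T * T).IsPositive := by
  have := isPositive_adjoint_comp_self T
  rwa [hT.adjoint_eq] at this

lemma ContinuousLinearMap.IsPositive.eq_of_mul_self_eq {S B : E →L[𝕜] E} (hS : S.IsPositive)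
    (hB : B.IsPositive) (h : S * S = B * B) : S = B := by
  obtain ⟨C, hC, hCC, hcomm⟩ := hB.isSelfAdjoint.isPositive_mul_self.exists_mul_self_eq
  have hSC : S = C := hS.eq_of_commute_of_mul_self_eq hC
    (hcomm S (h ▸ (Commute.refl S).mul_right (Commute.refl S))) (h.trans hCC.symm)
  have hBC : B = C := hB.eq_of_commute_of_mul_self_eq hC
    (hcomm B ((Commute.refl B).mul_right (Commute.refl B))) hCC.symm
  rw [hSC, hBC]

lemma clmAbs_eq_self {B : E →L[𝕜] E} (hB : B.IsPositive) : clmAbs B = B := by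
  have hex : ∃ S : E →L[𝕜] E, S.IsPositive ∧ S * S = star B * B :=
    ⟨B, hB, by rw [hB.isSelfAdjoint.star_eq]⟩
  rw [clmAbs, dif_pos hex]
  exact hex.choose_spec.1.eq_of_mul_self_eq hB
    (hex.choose_spec.2.trans (by rw [hB.isSelfAdjoint.star_eq]))

end PositiveOperators

section Trace

variable {ι ι' H : Type*} [NormedAddCommGroup H] [InnerProductSpace 𝕜 H]

lemma HilbertBasis.hasSum_norm_inner_sq (b : HilbertBasis ι 𝕜 H) (x : H) :
    HasSum (fun i => ‖⟪b i, x⟫_𝕜‖ ^ 2) (‖x‖ ^ 2) := by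
  have := lp.hasSum_norm (p := 2) (by norm_num) (b.repr x)
  simpa [b.repr_apply_apply, Real.rpow_two] using this

lemma HilbertBasis.summable_norm_inner_sq_prod (b : HilbertBasis ι' 𝕜 H) {x : ι → H}
    (hx : Summable fun j => ‖x j‖ ^ 2) : Summable fun p : ι × ι' => ‖⟪b p.2, x p.1⟫_𝕜‖ ^ 2 := by
  refine (summable_prod_of_nonneg fun _ => by positivity).mpr
    ⟨fun j => (b.hasSum_norm_inner_sq (x j)).summable, ?_⟩
  simpa only [(b.hasSum_norm_inner_sq _).tsum_eq] using hx

lemma HilbertBasis.summable_inner_mul_inner_prod (b : HilbertBasis ι' 𝕜 H) {x y : ι → H}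
    (hx : Summable fun j => ‖x j‖ ^ 2) (hy : Summable fun j => ‖y j‖ ^ 2) :
    Summable fun p : ι × ι' => ⟪x p.1, b p.2⟫_𝕜 * ⟪b p.2, y p.1⟫_𝕜 := by
  refine Summable.of_norm_bounded
    ((b.summable_norm_inner_sq_prod hx).add (b.summable_norm_inner_sq_prod hy)) fun p => ?_
  rw [norm_mul, norm_inner_symm]
  nlinarith [two_mul_le_add_sq ‖⟪b p.2, x p.1⟫_𝕜‖ ‖⟪b p.2, y p.1⟫_𝕜‖,
    norm_nonneg ⟪b p.2, x p.1⟫_𝕜, norm_nonneg ⟪b p.2, y p.1⟫_𝕜]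

/-- Expand `⟪Mᵢ, A T T* Mᵢ⟫` in the basis `N` and exchange the order of summation. -/
lemma traceAlong_mul_mul_star (M : HilbertBasis ι' 𝕜 E) (N : HilbertBasis ι 𝕜 E)
    (A T : E →L[𝕜] E) (hT : Summable fun j => ‖T (N j)‖ ^ 2) :
    traceAlong M (A * (T * star T)) = ∑' j, ⟪T (N j), A (T (N j))⟫_𝕜 := by
  have hAT : Summable fun j => ‖A (T (N j))‖ ^ 2 := by
    refine (hT.mul_left (‖A‖ ^ 2)).of_nonneg_of_le (fun _ => by positivity) fun j => ?_
    rw [← mul_pow]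
    exact pow_le_pow_left₀ (norm_nonneg _) (A.le_opNorm _) 2
  have hsum := M.summable_inner_mul_inner_prod hT hAT
  have hcol : ∀ i, ∑' j, ⟪T (N j), M i⟫_𝕜 * ⟪M i, A (T (N j))⟫_𝕜
      = ⟪M i, (A * (T * star T)) (M i)⟫_𝕜 := by
    intro i
    rw [mul_apply_eq_comp, ← adjoint_inner_left, mul_apply_eq_comp, star_eq_adjoint,
      ← adjoint_inner_left, ← N.tsum_inner_mul_inner]
    refine tsum_congr fun j => ?_
    rw [mul_comm, adjoint_inner_left, adjoint_inner_left, adjoint_inner_right]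
  rw [traceAlong, ← tsum_congr hcol]
  exact (hsum.tsum_comm (f := fun j i => ⟪T (N j), M i⟫_𝕜 * ⟪M i, A (T (N j))⟫_𝕜)).trans
    (tsum_congr fun j => M.tsum_inner_mul_inner _ _)

end Trace

lemma IsTraceClass.exists_summable_norm_apply_sq {C : E →L[𝕜] E} (hC : C.IsPositive)
    (h : IsTraceClass (C * C)) :
    ∃ (ι : Type u) (N : HilbertBasis ι 𝕜 E), Summable fun j => ‖C (N j)‖ ^ 2 := by
  obtain ⟨ι, N, hN⟩ := h
  refine ⟨ι, N, hN.congr fun j => ?_⟩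
  rw [clmAbs_eq_self hC.isSelfAdjoint.isPositive_mul_self, mul_apply_eq_comp,
    ← hC.inner_left_eq_inner_right, inner_self_eq_norm_sq]

theorem trace_continuous_of_strongly_continuous_rep_general {𝕜 : Type*} [RCLike 𝕜] {E : Type u}
    [NormedAddCommGroup E] [InnerProductSpace 𝕜 E] [CompleteSpace E]
    (A : E →L[𝕜] E) {B : E →L[𝕜] E} (hpos : B.IsPositive)
    (htc : IsTraceClass B)
    {G : Type*} [TopologicalSpace G]
    (U : G → E →L[𝕜] E)
    (hUunitary : ∀ g, U g ∈ unitary (E →L[𝕜] E))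
    (hUcont : ∀ x : E, Continuous fun g => U g x) :
    Continuous fun g => clmTrace (A * (U g * B * star (U g))) := by
  obtain ⟨C, hC, rfl, -⟩ := hpos.exists_mul_self_eq
  obtain ⟨ι, N, hN⟩ := htc.exists_summable_norm_apply_sq hC
  have hnorm : ∀ g j, ‖U g (C (N j))‖ = ‖C (N j)‖ := fun g _ =>
    norm_map_of_mem_unitary (hUunitary g) _
  have htrace : ∀ g, clmTrace (A * (U g * (C * C) * star (U g)))
      = ∑' j, ⟪U g (C (N j)), A (U g (C (N j)))⟫_𝕜 := fun g => by
    rw [show U g * (C * C) * star (U g) = (U g * C) * star (U g * C) by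
      rw [star_mul, hC.isSelfAdjoint.star_eq]; noncomm_ring]
    exact traceAlong_mul_mul_star _ N A _ (by simpa only [mul_apply_eq_comp, hnorm] using hN)
  simp_rw [htrace]
  refine continuous_tsum (fun j => (hUcont _).inner (A.continuous.comp (hUcont _)))
    (hN.mul_left ‖A‖) fun j g => ?_
  calc ‖⟪U g (C (N j)), A (U g (C (N j)))⟫_𝕜‖
      ≤ ‖U g (C (N j))‖ * (‖A‖ * ‖U g (C (N j))‖) :=
        (norm_inner_le_norm _ _).trans (by gcongr; exact A.le_opNorm _)
    _ = ‖A‖ * ‖C (N j)‖ ^ 2 := by rw [hnorm]; ring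

/-- If `g ↦ U_g` is a strongly continuous unitary representation of a topological group `G`,
`A` is bounded and `B` is self-adjoint, positive and trace class, then
`g ↦ tr (A U_g B U_g⁻¹)` is continuous. -/
theorem trace_continuous_of_strongly_continuous_rep {𝕜 : Type*} [RCLike 𝕜] {E : Type u}
    [NormedAddCommGroup E] [InnerProductSpace 𝕜 E] [CompleteSpace E]
    (A : E →L[𝕜] E) {B : E →L[𝕜] E} (hsa : IsSelfAdjoint B) (hpos : B.IsPositive)
    (htc : IsTraceClass B)
    {G : Type*} [Group G] [TopologicalSpace G] [IsTopologicalGroup G]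
    (U : G → E →L[𝕜] E) (hU1 : U 1 = 1) (hUmul : ∀ g h, U (g * h) = U g * U h)
    (hUunitary : ∀ g, U g ∈ unitary (E →L[𝕜] E))
    (hUcont : ∀ x : E, Continuous fun g => U g x) :
    Continuous fun g => clmTrace (A * (U g * B * star (U g))) :=
  trace_continuous_of_strongly_continuous_rep_general A hpos htc U hUunitary hUcont
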